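/- arXiv:2006.12192 — 2 statements merged into one kernel-verified Lean document; each statement's English description precedes it below -/
import Mathlib

section
/- Let 2 < t₀ < T, δ, K₁, K₂ > 0, p₁, p₂ > 1 with p₂ < p₁ + 1, and let φ ∈ C¹([t₀, T)) be nonnegative. Suppose δ ≤ K₁ t φ'(t) and φ(t)^{p₁} ≤ K₂ t (log t)^{p₂ - 1} φ'(t) for all t ∈ (t₀, T). Then there exist constants δ₀ > 0 and K₃ > 0, depending only on t₀, K₁, K₂, p₁, p₂ (not on δ), such that whenever 0 < δ < δ₀, T ≤ exp(K₃ δ^{-(p₁-1)/(p₁-p₂+1)}). -/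
/-!
If `T > exp B` with `B = K₃ δ ^ (-(p₁ - 1) / (p₁ - p₂ + 1))`, the first inequality makes `φ` grow
at least like `(δ / K₁) log t`, so `φ ≥ δ B / (4 K₁)` on `[exp (B / 2), exp B]`. On that interval
`log t ≤ B`, and the second inequality becomes `φ ^ p₁ ≤ K₂ B ^ (p₂ - 1) t φ'`; integrating
`φ' / φ ^ p₁` bounds the logarithmic length `B / 2` of the interval by
`K₂ B ^ (p₂ - 1) φ (exp (B / 2)) ^ (1 - p₁) / (p₁ - 1)`. Together these give
`B ^ (p₁ - p₂ + 1) ≤ C₀ δ ^ (1 - p₁)`, which the choice `K₃ > C₀ ^ (1 / (p₁ - p₂ + 1))` rules out.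
-/

open Real Set

theorem sub_le_sub_of_hasDerivAt_le {f g f' g' : ℝ → ℝ} {a b : ℝ} (hab : a ≤ b)
    (hf : ∀ x ∈ Icc a b, HasDerivAt f (f' x) x) (hg : ∀ x ∈ Icc a b, HasDerivAt g (g' x) x)
    (hle : ∀ x ∈ Ioo a b, g' x ≤ f' x) : g b - g a ≤ f b - f a := by
  have hmono : MonotoneOn (f - g) (Icc a b) := by
    refine monotoneOn_of_hasDerivWithinAt_nonneg (convex_Icc a b) (f' := f' - g')
      (fun x hx => ((hf x hx).sub (hg x hx)).continuousAt.continuousWithinAt)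
      (fun x hx => ?_) (fun x hx => ?_) <;> rw [interior_Icc] at hx
    · exact ((hf x (Ioo_subset_Icc_self hx)).sub (hg x (Ioo_subset_Icc_self hx))).hasDerivWithinAt
    · exact sub_nonneg.2 (hle x hx)
  have := hmono (left_mem_Icc.2 hab) (right_mem_Icc.2 hab) hab
  simp only [Pi.sub_apply] at this
  linarith

theorem mul_log_sub_le_sub_of_le_mul_deriv {φ φ' : ℝ → ℝ} {a b K δ : ℝ} (hK : 0 < K)
    (ha : 0 < a) (hab : a ≤ b) (hφ : ∀ x ∈ Icc a b, HasDerivAt φ (φ' x) x)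
    (h : ∀ x ∈ Ioo a b, δ ≤ K * x * φ' x) : δ / K * (log b - log a) ≤ φ b - φ a := by
  rw [mul_sub]
  refine sub_le_sub_of_hasDerivAt_le hab hφ (g' := fun x => δ / K * x⁻¹)
    (fun x hx => ((hasDerivAt_log (ha.trans_le hx.1).ne').const_mul _)) fun x hx => ?_
  have hx0 : 0 < x := ha.trans hx.1
  rw [show δ / K * x⁻¹ = δ / (K * x) by field_simp, div_le_iff₀ (by positivity)]
  linarith [h x hx]

theorem log_sub_le_mul_rpow_of_rpow_le_mul_deriv {φ φ' : ℝ → ℝ} {a b L p : ℝ} (hp : 1 < p)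
    (hL : 0 < L) (ha : 0 < a) (hab : a ≤ b) (hφ : ∀ x ∈ Icc a b, HasDerivAt φ (φ' x) x)
    (hpos : ∀ x ∈ Icc a b, 0 < φ x) (h : ∀ x ∈ Ioo a b, φ x ^ p ≤ L * x * φ' x) :
    log b - log a ≤ L * φ a ^ (1 - p) / (p - 1) := by
  have hp' : 1 - p ≠ 0 := by linarith
  have hcmp := sub_le_sub_of_hasDerivAt_le hab (f := fun x => φ x ^ (1 - p) / (1 - p))
    (g := fun x => log x / L)
    (fun x hx => ((hφ x hx).rpow_const (Or.inl (hpos x hx).ne')).div_const _)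
    (fun x hx => (hasDerivAt_log (ha.trans_le hx.1).ne').div_const L) fun x hx => ?_
  · have hb : 0 ≤ φ b ^ (1 - p) := (rpow_pos_of_pos (hpos b (right_mem_Icc.2 hab)) _).le
    have hp1 : 0 < p - 1 := by linarith
    rw [← sub_div, div_le_iff₀ hL] at hcmp
    rw [le_div_iff₀ hp1]
    have e : (φ b ^ (1 - p) / (1 - p) - φ a ^ (1 - p) / (1 - p)) * L * (p - 1)
        = L * φ a ^ (1 - p) - L * φ b ^ (1 - p) := by
      field_simp
      ring
    linarith [mul_le_mul_of_nonneg_right hcmp hp1.le, mul_nonneg hL.le hb]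
  · have hx0 : 0 < x := ha.trans hx.1
    have hφx := hpos x (Ioo_subset_Icc_self hx)
    have hφp : 0 < φ x ^ p := rpow_pos_of_pos hφx p
    have e : φ' x * (1 - p) * φ x ^ (1 - p - 1) / (1 - p) = φ' x / φ x ^ p := by
      rw [show 1 - p - 1 = -p by ring, rpow_neg hφx.le]
      field_simp
    rw [e, le_div_iff₀ hφp]
    calc x⁻¹ / L * φ x ^ p ≤ x⁻¹ / L * (L * x * φ' x) := by gcongr; exact h x hx
      _ = φ' x := by field_simp

theorem rpow_le_two_mul_of_half_le {B u K p q : ℝ} (hB : 0 < B) (hu : 0 < u)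
    (h : B / 2 ≤ K * B ^ (q - 1) * (u * B) ^ (1 - p)) :
    B ^ (p - q + 1) ≤ 2 * K * u ^ (1 - p) := by
  have e : B ^ (p - q + 1) * (B ^ (q - 1) * B ^ (1 - p)) = B := by
    rw [← rpow_add hB, ← rpow_add hB, show p - q + 1 + (q - 1 + (1 - p)) = 1 by ring, rpow_one]
  rw [mul_rpow hu.le hB.le] at h
  refine le_of_mul_le_mul_right ?_
    (mul_pos (rpow_pos_of_pos hB (q - 1)) (rpow_pos_of_pos hB (1 - p)))
  rw [e]
  linarith

theorem le_mul_rpow_div_of_rpow_le {B C δ β γ : ℝ} (hB : 0 ≤ B) (hC : 0 ≤ C) (hδ : 0 ≤ δ)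
    (hβ : 0 < β) (h : B ^ β ≤ C * δ ^ γ) : B ≤ C ^ (1 / β) * δ ^ (γ / β) := by
  rw [← rpow_le_rpow_iff hB (by positivity) hβ, mul_rpow (by positivity) (by positivity),
    ← rpow_mul hC, ← rpow_mul hδ, one_div_mul_cancel hβ.ne', div_mul_cancel₀ _ hβ.ne', rpow_one]
  exact h

theorem half_le_of_ode_on_Icc_exp {t₀ K₁ K₂ p₁ p₂ δ B : ℝ} {φ φ' : ℝ → ℝ} (ht₀ : 1 < t₀)
    (hK₁ : 0 < K₁) (hK₂ : 0 < K₂) (hp₁ : 1 < p₁) (hp₂ : 1 ≤ p₂) (hδ : 0 < δ)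
    (hB : 4 * log t₀ ≤ B) (hφ : ∀ t ∈ Icc t₀ (exp B), HasDerivAt φ (φ' t) t) (hφ₀ : 0 ≤ φ t₀)
    (h₁ : ∀ t ∈ Ioo t₀ (exp B), δ ≤ K₁ * t * φ' t)
    (h₂ : ∀ t ∈ Ioo t₀ (exp B), φ t ^ p₁ ≤ K₂ * t * log t ^ (p₂ - 1) * φ' t) :
    B / 2 ≤ K₂ / (p₁ - 1) * B ^ (p₂ - 1) * (δ / (4 * K₁) * B) ^ (1 - p₁) := by
  have hlogt₀ : 0 < log t₀ := log_pos ht₀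
  have hB0 : 0 < B := by linarith
  have ht₀s : t₀ < exp (B / 2) := by rw [← log_lt_iff_lt_exp (by linarith)]; linarith
  have hsB : exp (B / 2) ≤ exp B := exp_le_exp.2 (by linarith)
  have hgrowth : ∀ t ∈ Icc (exp (B / 2)) (exp B), δ / (4 * K₁) * B ≤ φ t := by
    intro t ht
    have hlog : B / 2 ≤ log t := (le_log_iff_exp_le (by linarith [exp_pos (B / 2), ht.1])).2 ht.1
    have := mul_log_sub_le_sub_of_le_mul_deriv hK₁ (by linarith) (ht₀s.le.trans ht.1)
      (fun x hx => hφ x ⟨hx.1, hx.2.trans ht.2⟩) (fun x hx => h₁ x ⟨hx.1, hx.2.trans_le ht.2⟩)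
    calc δ / (4 * K₁) * B = δ / K₁ * (B / 4) := by ring
      _ ≤ δ / K₁ * (log t - log t₀) := by gcongr; linarith
      _ ≤ φ t := by linarith
  have hM : 0 < δ / (4 * K₁) * B := by positivity
  have hblow := log_sub_le_mul_rpow_of_rpow_le_mul_deriv hp₁ (L := K₂ * B ^ (p₂ - 1))
    (by positivity) (exp_pos _) hsB (fun x hx => hφ x ⟨ht₀s.le.trans hx.1, hx.2⟩)
    (fun x hx => hM.trans_le (hgrowth x hx)) fun x hx => ?_
  · rw [log_exp, log_exp] at hblow
    calc B / 2 = B - B / 2 := by ring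
      _ ≤ K₂ * B ^ (p₂ - 1) * φ (exp (B / 2)) ^ (1 - p₁) / (p₁ - 1) := hblow
      _ ≤ K₂ * B ^ (p₂ - 1) * (δ / (4 * K₁) * B) ^ (1 - p₁) / (p₁ - 1) := by
        gcongr K₂ * B ^ (p₂ - 1) * ?_ / _
        exact rpow_le_rpow_of_nonpos hM (hgrowth _ (left_mem_Icc.2 hsB)) (by linarith)
      _ = K₂ / (p₁ - 1) * B ^ (p₂ - 1) * (δ / (4 * K₁) * B) ^ (1 - p₁) := by ring
  · have hx : x ∈ Ioo t₀ (exp B) := ⟨ht₀s.trans hx.1, hx.2⟩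
    have hx0 : 0 < x := by linarith [hx.1]
    have hlogx : 0 ≤ log x := log_nonneg (by linarith [hx.1])
    have hlogxB : log x ≤ B := (log_le_iff_le_exp hx0).2 hx.2.le
    have hφ' : 0 ≤ φ' x := (pos_of_mul_pos_right (hδ.trans_le (h₁ x hx)) (by positivity)).le
    calc φ x ^ p₁ ≤ K₂ * x * log x ^ (p₂ - 1) * φ' x := h₂ x hx
      _ ≤ K₂ * x * B ^ (p₂ - 1) * φ' x := by gcongr
      _ = K₂ * B ^ (p₂ - 1) * x * φ' x := by ring

/-- ODE comparison lemma (Lemma 3.10 of Ikeda–Sobajima–Wakasa). -/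
theorem ode_lifespan_lemma (t₀ K₁ K₂ p₁ p₂ : ℝ)
    (ht₀ : 2 < t₀) (hK₁ : 0 < K₁) (hK₂ : 0 < K₂)
    (hp₁ : 1 < p₁) (hp₂ : 1 < p₂) (hp : p₂ < p₁ + 1) :
    ∃ δ₀ K₃ : ℝ, 0 < δ₀ ∧ 0 < K₃ ∧
      ∀ δ T : ℝ, 0 < δ → δ < δ₀ → t₀ < T →
        ∀ φ φ' : ℝ → ℝ,
          (∀ t ∈ Ico t₀ T, HasDerivAt φ (φ' t) t) →
          (∀ t ∈ Ico t₀ T, 0 ≤ φ t) →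
          (∀ t ∈ Ioo t₀ T, δ ≤ K₁ * t * φ' t) →
          (∀ t ∈ Ioo t₀ T, φ t ^ p₁ ≤ K₂ * t * (Real.log t) ^ (p₂ - 1) * φ' t) →
          T ≤ Real.exp (K₃ * δ ^ (-(p₁ - 1) / (p₁ - p₂ + 1))) := by
  have hlogt₀ : 0 < log t₀ := log_pos (by linarith)
  have hβ : 0 < p₁ - p₂ + 1 := by linarith
  set C₀ := 2 * (K₂ / (p₁ - 1)) / (4 * K₁) ^ (1 - p₁)
  have hC₀ : 0 < C₀ := by
    have : 0 < p₁ - 1 := by linarith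
    positivity
  refine ⟨1, C₀ ^ (1 / (p₁ - p₂ + 1)) + 4 * log t₀, one_pos, by positivity, ?_⟩
  intro δ T hδ hδ1 hT φ φ' hφ hφ₀ h₁ h₂
  by_contra! hTB
  set A := δ ^ (-(p₁ - 1) / (p₁ - p₂ + 1))
  have hA : 1 ≤ A := one_le_rpow_of_pos_of_le_one_of_nonpos hδ hδ1.le
    (div_nonpos_of_nonpos_of_nonneg (by linarith) hβ.le)
  set B := (C₀ ^ (1 / (p₁ - p₂ + 1)) + 4 * log t₀) * A
  have hB : 4 * log t₀ ≤ B := by nlinarith [rpow_nonneg hC₀.le (1 / (p₁ - p₂ + 1))]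
  have hsub : Icc t₀ (exp B) ⊆ Ico t₀ T := fun t ht => ⟨ht.1, ht.2.trans_lt hTB⟩
  have hhalf := half_le_of_ode_on_Icc_exp (by linarith) hK₁ hK₂ hp₁ hp₂.le hδ hB
    (fun t ht => hφ t (hsub ht)) (hφ₀ t₀ ⟨le_rfl, hT⟩)
    (fun t ht => h₁ t ⟨ht.1, ht.2.trans hTB⟩) (fun t ht => h₂ t ⟨ht.1, ht.2.trans hTB⟩)
  have hB0 : 0 < B := by linarith
  have hpow : B ^ (p₁ - p₂ + 1) ≤ C₀ * δ ^ (-(p₁ - 1)) :=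
    calc B ^ (p₁ - p₂ + 1) ≤ 2 * (K₂ / (p₁ - 1)) * (δ / (4 * K₁)) ^ (1 - p₁) :=
          rpow_le_two_mul_of_half_le hB0 (by positivity) hhalf
      _ = C₀ * δ ^ (-(p₁ - 1)) := by rw [div_rpow hδ.le (by positivity), neg_sub]; ring
  have hBA : B ≤ C₀ ^ (1 / (p₁ - p₂ + 1)) * A :=
    le_mul_rpow_div_of_rpow_le hB0.le hC₀.le hδ.le hβ hpow
  nlinarith [mul_pos hlogt₀ (one_pos.trans_le hA)]
end

section
/- Let Y : [2, T) → [0, ∞) be C¹ and nondecreasing, and suppose there exist constants A, B > 0 and p > 1 such that for all M ∈ [2, T): Y(M)^p ≤ A M (log M)^{p-1} Y'(M) and ε^p ≤ B M Y'(M), where ε ∈ (0,1). Then there exist constants K, ε₀ > 0 depending only on A, B, p such that if ε < ε₀ then T ≤ exp(K ε^{-p(p-1)}). -/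
/-!
Write `E = ε ^ (-p (p - 1))` and suppose `T > exp (K E)`; put `t = K E / 2`. From `ε ^ p ≤ B M Y'`,
`Y` grows at least like `(ε ^ p / B) log M`, so `Y ≥ m := ε ^ p t / (2 B)` on `[e ^ t, e ^ (2 t)]`.
There `log M ≤ 2 t`, so `Y ^ p ≤ A (2 t) ^ (p - 1) M Y'`, a Riccati inequality in the variable
`log M`: `Y ^ (1 - p)` decreases at rate at least `(p - 1) / (A (2 t) ^ (p - 1))` and must stay
positive, whence `(p - 1) t < A (2 t) ^ (p - 1) m ^ (1 - p) = A (4 B) ^ (p - 1) E`. This is false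
once `K > 2 A (4 B) ^ (p - 1) / (p - 1)`; taking also `K ≥ 4` and `ε < 1` ensures `t ≥ 2`.
-/

open Real Set

lemma monotoneOn_of_forall_hasDerivAt_nonneg {D : Set ℝ} (hD : Convex ℝ D) {f f' : ℝ → ℝ}
    (hf : ∀ x ∈ D, HasDerivAt f (f' x) x) (hf' : ∀ x ∈ D, 0 ≤ f' x) : MonotoneOn f D :=
  monotoneOn_of_hasDerivWithinAt_nonneg hD (fun x hx => (hf x hx).continuousAt.continuousWithinAt)
    (fun x hx => (hf x (interior_subset hx)).hasDerivWithinAt)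
    (fun x hx => hf' x (interior_subset hx))

lemma antitoneOn_of_forall_hasDerivAt_nonpos {D : Set ℝ} (hD : Convex ℝ D) {f f' : ℝ → ℝ}
    (hf : ∀ x ∈ D, HasDerivAt f (f' x) x) (hf' : ∀ x ∈ D, f' x ≤ 0) : AntitoneOn f D :=
  antitoneOn_of_hasDerivWithinAt_nonpos hD (fun x hx => (hf x hx).continuousAt.continuousWithinAt)
    (fun x hx => (hf x (interior_subset hx)).hasDerivWithinAt)
    (fun x hx => hf' x (interior_subset hx))

lemma add_mul_log_sub_log_le_of_le_mul_deriv {Y Y' : ℝ → ℝ} {a b c : ℝ} (ha : 0 < a) (hab : a ≤ b)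
    (hY : ∀ x ∈ Icc a b, HasDerivAt Y (Y' x) x) (hc : ∀ x ∈ Icc a b, c ≤ x * Y' x) :
    Y a + c * (log b - log a) ≤ Y b := by
  have hmono : MonotoneOn (fun x => Y x - c * log x) (Icc a b) := by
    refine monotoneOn_of_forall_hasDerivAt_nonneg (f' := fun x => Y' x - c * x⁻¹) (convex_Icc a b)
      (fun x hx => (hY x hx).sub ((hasDerivAt_log (ha.trans_le hx.1).ne').const_mul c))
      (fun x hx => ?_)
    have hx : 0 < x := ha.trans_le hx.1
    rw [sub_nonneg, ← div_eq_mul_inv, div_le_iff₀ hx, mul_comm]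
    exact hc x ‹_›
  have := hmono (left_mem_Icc.2 hab) (right_mem_Icc.2 hab) hab
  simp only at this
  linarith

lemma div_mul_le_of_le_mul_deriv {Y Y' : ℝ → ℝ} {B c t : ℝ} (hB : 0 < B) (hc : 0 ≤ c)
    (ht : 2 ≤ t) (hY : ∀ x ∈ Icc 2 (exp t), HasDerivAt Y (Y' x) x) (hY2 : 0 ≤ Y 2)
    (hgrowth : ∀ x ∈ Icc 2 (exp t), c ≤ B * x * Y' x) :
    c * t / (2 * B) ≤ Y (exp t) := by
  have h2 : 2 ≤ exp t := by linarith [add_one_le_exp t]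
  have hlog := add_mul_log_sub_log_le_of_le_mul_deriv (c := c / B) two_pos h2 hY fun x hx => by
    rw [div_le_iff₀ hB]; linarith [hgrowth x hx]
  rw [log_exp] at hlog
  have : c / B * (t / 2) ≤ c / B * (t - log 2) := by gcongr; linarith [log_two_lt_d9]
  calc c * t / (2 * B) = c / B * (t / 2) := by field_simp
    _ ≤ Y (exp t) := by linarith

-- `D Y ^ (1 - p) + (p - 1) log x` is antitone and its first term stays positive.
lemma sub_one_mul_log_sub_log_lt_of_rpow_le_mul_deriv {Y Y' : ℝ → ℝ} {a b p D : ℝ}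
    (hp : 1 < p) (hD : 0 < D) (ha : 0 < a) (hab : a ≤ b)
    (hY : ∀ x ∈ Icc a b, HasDerivAt Y (Y' x) x) (hpos : ∀ x ∈ Icc a b, 0 < Y x)
    (hineq : ∀ x ∈ Icc a b, Y x ^ p ≤ D * x * Y' x) :
    (p - 1) * (log b - log a) < D * Y a ^ (1 - p) := by
  have hanti : AntitoneOn (fun x => D * Y x ^ (1 - p) + (p - 1) * log x) (Icc a b) := by
    refine antitoneOn_of_forall_hasDerivAt_nonpos
      (f' := fun x => D * (Y' x * (1 - p) * Y x ^ (1 - p - 1)) + (p - 1) * x⁻¹) (convex_Icc a b)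
      (fun x hx => (((hY x hx).rpow_const (Or.inl (hpos x hx).ne')).const_mul D).add
        ((hasDerivAt_log (ha.trans_le hx.1).ne').const_mul (p - 1)))
      (fun x hxI => ?_)
    have hx : 0 < x := ha.trans_le hxI.1
    have hYp : 0 < Y x ^ p := rpow_pos_of_pos (hpos x hxI) p
    rw [show 1 - p - 1 = -p by ring, rpow_neg (hpos x hxI).le]
    have key : x⁻¹ ≤ D * Y' x * (Y x ^ p)⁻¹ := by
      rw [← div_eq_mul_inv, le_div_iff₀ hYp, ← div_eq_inv_mul, div_le_iff₀ hx]
      linarith [hineq x hxI]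
    nlinarith [mul_le_mul_of_nonneg_left key (by linarith : (0:ℝ) ≤ p - 1)]
  have := hanti (left_mem_Icc.2 hab) (right_mem_Icc.2 hab) hab
  have hb : 0 < D * Y b ^ (1 - p) := mul_pos hD (rpow_pos_of_pos (hpos b (right_mem_Icc.2 hab)) _)
  simp only at this
  linarith

lemma sub_one_mul_lt_of_exp_two_mul_lt {Y Y' : ℝ → ℝ} {A B c p T t : ℝ} (hA : 0 < A) (hB : 0 < B)
    (hc : 0 < c) (hp : 1 < p)
    (hY : ∀ M ∈ Ico (2:ℝ) T, HasDerivAt Y (Y' M) M) (hY0 : ∀ M ∈ Ico (2:ℝ) T, 0 ≤ Y M)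
    (hmono : MonotoneOn Y (Ico (2:ℝ) T))
    (hriccati : ∀ M ∈ Ico (2:ℝ) T, Y M ^ p ≤ A * M * log M ^ (p - 1) * Y' M)
    (hgrowth : ∀ M ∈ Ico (2:ℝ) T, c ≤ B * M * Y' M)
    (ht : 2 ≤ t) (hT : exp (2 * t) < T) :
    (p - 1) * t < A * (4 * B / c) ^ (p - 1) := by
  have ht0 : 0 < t := by linarith
  have hM₁M₂ : exp t ≤ exp (2 * t) := exp_le_exp.2 (by linarith)
  have h2M₁ : 2 ≤ exp t := by linarith [add_one_le_exp t]
  have hmem₁ : ∀ M ∈ Icc 2 (exp t), M ∈ Ico (2:ℝ) T :=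
    fun M hM => ⟨hM.1, hM.2.trans_lt (hM₁M₂.trans_lt hT)⟩
  have hmem₂ : ∀ M ∈ Icc (exp t) (exp (2 * t)), M ∈ Ico (2:ℝ) T :=
    fun M hM => ⟨h2M₁.trans hM.1, hM.2.trans_lt hT⟩
  set m := c * t / (2 * B) with hm
  have hm0 : 0 < m := by positivity
  have hYM₁ : m ≤ Y (exp t) :=
    div_mul_le_of_le_mul_deriv hB hc.le ht (fun x hx => hY x (hmem₁ x hx))
      (hY0 2 (hmem₁ 2 (left_mem_Icc.2 h2M₁))) (fun x hx => hgrowth x (hmem₁ x hx))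
  have hYm : ∀ x ∈ Icc (exp t) (exp (2 * t)), m ≤ Y x := fun x hx =>
    hYM₁.trans (hmono (hmem₂ _ (left_mem_Icc.2 hM₁M₂)) (hmem₂ x hx) hx.1)
  have hriccati' : ∀ x ∈ Icc (exp t) (exp (2 * t)), Y x ^ p ≤ A * (2 * t) ^ (p - 1) * x * Y' x :=
    fun x hxI => by
    have hx : 0 < x := (exp_pos t).trans_le hxI.1
    have hY' : 0 ≤ Y' x :=
      (pos_of_mul_pos_right (hc.trans_le (hgrowth x (hmem₂ x hxI))) (by positivity)).le
    have hlog : log x ^ (p - 1) ≤ (2 * t) ^ (p - 1) := by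
      gcongr
      · exact log_nonneg (by linarith [hxI.1])
      · exact (log_le_iff_le_exp hx).2 hxI.2
    calc Y x ^ p ≤ A * x * log x ^ (p - 1) * Y' x := hriccati x (hmem₂ x hxI)
      _ ≤ A * x * (2 * t) ^ (p - 1) * Y' x := by gcongr
      _ = _ := by ring
  have hblowup := sub_one_mul_log_sub_log_lt_of_rpow_le_mul_deriv hp
    (by positivity : 0 < A * (2 * t) ^ (p - 1)) (exp_pos t) hM₁M₂
    (fun x hx => hY x (hmem₂ x hx)) (fun x hx => hm0.trans_le (hYm x hx)) hriccati'
  rw [log_exp, log_exp, show 2 * t - t = t by ring] at hblowup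
  calc (p - 1) * t < A * (2 * t) ^ (p - 1) * Y (exp t) ^ (1 - p) := hblowup
    _ ≤ A * (2 * t) ^ (p - 1) * m ^ (1 - p) := by
      have := rpow_le_rpow_of_nonpos hm0 hYM₁ (by linarith : 1 - p ≤ 0)
      gcongr
    _ = A * (4 * B / c) ^ (p - 1) := by
      rw [mul_assoc, show 1 - p = -(p - 1) by ring, rpow_neg hm0.le, ← inv_rpow hm0.le,
        ← mul_rpow (by positivity) (inv_nonneg.2 hm0.le), hm]
      congr 2
      field_simp
      norm_num

/-- Critical-case lifespan bound: differential inequalities for Y give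
    T ≤ exp(K ε^{-p(p-1)}). -/
theorem critical_lifespan_from_Y (A B p : ℝ) (hA : 0 < A) (hB : 0 < B) (hp : 1 < p) :
    ∃ K ε₀ : ℝ, 0 < K ∧ 0 < ε₀ ∧
      ∀ ε : ℝ, 0 < ε → ε < ε₀ →
        ∀ T : ℝ, 2 < T →
          ∀ Y Y' : ℝ → ℝ,
            (∀ M ∈ Set.Ico (2:ℝ) T, HasDerivAt Y (Y' M) M) →
            (∀ M ∈ Set.Ico (2:ℝ) T, 0 ≤ Y M) →
            MonotoneOn Y (Set.Ico (2:ℝ) T) →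
            (∀ M ∈ Set.Ico (2:ℝ) T, Y M ^ p ≤ A * M * (Real.log M) ^ (p - 1) * Y' M) →
            (∀ M ∈ Set.Ico (2:ℝ) T, ε ^ p ≤ B * M * Y' M) →
            T ≤ Real.exp (K * ε ^ (-(p * (p - 1)))) := by
  have hp1 : 0 < p - 1 := by linarith
  set C := A * (4 * B) ^ (p - 1)
  set K := 2 * C / (p - 1) + 4
  have hK : 4 ≤ K := by linarith [div_pos (mul_pos two_pos (by positivity : 0 < C)) hp1]
  refine ⟨K, 1, by linarith, one_pos,
    fun ε hε hε1 T _ Y Y' hY hY0 hmono hriccati hgrowth => ?_⟩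
  set E := ε ^ (-(p * (p - 1)))
  have hE : 1 ≤ E := one_le_rpow_of_pos_of_le_one_of_nonpos hε hε1.le (by nlinarith)
  have hCE : A * (4 * B / ε ^ p) ^ (p - 1) = C * E := by
    rw [div_rpow (by positivity) (rpow_nonneg hε.le p), ← rpow_mul hε.le, div_eq_mul_inv,
      ← rpow_neg hε.le]
    exact (mul_assoc _ _ _).symm
  by_contra! hT
  have hlt := sub_one_mul_lt_of_exp_two_mul_lt hA hB (rpow_pos_of_pos hε p) hp hY hY0 hmono
    hriccati hgrowth (t := K * E / 2) (by nlinarith) (by rwa [mul_div_cancel₀ _ two_ne_zero])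
  have hKE : (p - 1) * (K * E / 2) = C * E + 2 * (p - 1) * E := by
    simp only [K]; field_simp; ring
  nlinarith
end
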